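/- arXiv:2212.08791 — 2 statements merged into one kernel-verified Lean document; each statement's English description precedes it below -/
import Mathlib

section
/- Gronwall comparison for annealed decay: suppose a nonnegative differentiable function L : [t*,∞) → ℝ satisfies L'(t) ≤ −C t^{−β} L(t) + C'/(t log t) for all t ≥ t* > 1, where 0 < β < 1 and C, C' > 0. Then there exists C'' > 0 such that L(t) ≤ C'' t^{−(1−β)} for all t ≥ t*. -/
open Real

/-- Gronwall comparison for annealed decay: if `L' (t) ≤ −C t^{−β} L(t) + C'/(t log t)`
for `t ≥ t* > 1`, with `0 < β < 1`, `C, C' > 0` and `L ≥ 0`, then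
`L(t) ≤ C'' t^{−(1−β)}` for some `C'' > 0`. -/
theorem gronwall_annealed (L L' : ℝ → ℝ) (tstar C C' β : ℝ)
    (htstar : 1 < tstar) (hβ0 : 0 < β) (hβ1 : β < 1) (hC : 0 < C) (hC' : 0 < C')
    (hLnonneg : ∀ t ≥ tstar, 0 ≤ L t)
    (hderiv : ∀ t ≥ tstar, HasDerivAt L (L' t) t)
    (hineq : ∀ t ≥ tstar, L' t ≤ -C * t ^ (-β) * L t + C' / (t * Real.log t)) :
    ∃ C'' > 0, ∀ t ≥ tstar, L t ≤ C'' * t ^ (-(1 - β)) := by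
  have h1β : (0:ℝ) < 1 - β := by linarith
  -- choose a large time t₁
  obtain ⟨t₁, ht₁tstar, ht₁1, hstep⟩ :
      ∃ t₁ : ℝ, tstar ≤ t₁ ∧ 1 < t₁ ∧ (1 - β) * t₁ ^ (β - 1) < C / 2 := by
    set y : ℝ := max 1 (2 * (1 - β) / C) with hy_def
    have hy1 : (1:ℝ) ≤ y := le_max_left _ _
    have hy0 : (0:ℝ) ≤ y := by linarith
    set t₂ : ℝ := y ^ (1 - β)⁻¹ with ht₂_def
    have ht₂0 : 0 ≤ t₂ := Real.rpow_nonneg hy0 _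
    refine ⟨max tstar (t₂ + 1), le_max_left _ _, lt_of_lt_of_le htstar (le_max_left _ _), ?_⟩
    set t₁ : ℝ := max tstar (t₂ + 1) with ht₁_def
    have ht₁1 : 1 < t₁ := lt_of_lt_of_le htstar (le_max_left _ _)
    have ht₁0 : 0 < t₁ := by linarith
    have ht₂lt : t₂ < t₁ := lt_of_lt_of_le (by linarith) (le_max_right _ _)
    have hyt₁ : y < t₁ ^ (1 - β) := by
      have := Real.rpow_lt_rpow ht₂0 ht₂lt h1β
      rwa [ht₂_def, Real.rpow_inv_rpow hy0 h1β.ne'] at this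
    have ht₁pow0 : 0 < t₁ ^ (1 - β) := Real.rpow_pos_of_pos ht₁0 _
    have hpowinv : t₁ ^ (β - 1) = (t₁ ^ (1 - β))⁻¹ := by
      rw [show β - 1 = -(1 - β) by ring, Real.rpow_neg ht₁0.le]
    have h3 : 2 * (1 - β) / C < t₁ ^ (1 - β) := lt_of_le_of_lt (le_max_right _ _) hyt₁
    have h4 : 2 * (1 - β) < C * t₁ ^ (1 - β) := by
      rw [div_lt_iff₀ hC] at h3; linarith
    have h6 : 2 * (1 - β) / t₁ ^ (1 - β) < C := (div_lt_iff₀ ht₁pow0).2 (by linarith)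
    rw [hpowinv, lt_div_iff₀ (by norm_num : (0:ℝ) < 2)]
    calc (1 - β) * (t₁ ^ (1 - β))⁻¹ * 2 = 2 * (1 - β) / t₁ ^ (1 - β) := by
          rw [div_eq_mul_inv]; ring
      _ < C := h6
  have ht₁0 : 0 < t₁ := by linarith
  have hlogt₁ : 0 < Real.log t₁ := Real.log_pos ht₁1
  have ht₁pow0 : 0 < t₁ ^ (1 - β) := Real.rpow_pos_of_pos ht₁0 _
  -- choice of constant K
  obtain ⟨K, hKfrac, hKL, hK0⟩ :
      ∃ K : ℝ, 2 * C' / (C * Real.log t₁) < K ∧ L t₁ * t₁ ^ (1 - β) < K ∧ 0 < K := by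
    refine ⟨max (2 * C' / (C * Real.log t₁)) (L t₁ * t₁ ^ (1 - β)) + 1, ?_, ?_, ?_⟩
    · linarith [le_max_left (2 * C' / (C * Real.log t₁)) (L t₁ * t₁ ^ (1 - β))]
    · linarith [le_max_right (2 * C' / (C * Real.log t₁)) (L t₁ * t₁ ^ (1 - β))]
    · have h8 : 0 ≤ 2 * C' / (C * Real.log t₁) := by positivity
      linarith [le_max_left (2 * C' / (C * Real.log t₁)) (L t₁ * t₁ ^ (1 - β))]
  have hBderiv : ∀ x : ℝ, 0 < x →
      HasDerivAt (fun s : ℝ => K * s ^ (-(1 - β))) (K * (-(1 - β) * x ^ (-(1 - β) - 1))) x := by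
    intro x hx
    exact (Real.hasDerivAt_rpow_const (Or.inl hx.ne')).const_mul K
  -- initial condition at t₁
  have ha : L t₁ ≤ K * t₁ ^ (-(1 - β)) := by
    have hpow0 : (0:ℝ) < t₁ ^ (-(1 - β)) := Real.rpow_pos_of_pos ht₁0 _
    have hmulone : t₁ ^ (1 - β) * t₁ ^ (-(1 - β)) = 1 := by
      rw [← Real.rpow_add ht₁0]; simp
    have hmm := mul_le_mul_of_nonneg_right hKL.le hpow0.le
    calc L t₁ = L t₁ * (t₁ ^ (1 - β) * t₁ ^ (-(1 - β))) := by rw [hmulone, mul_one]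
      _ = L t₁ * t₁ ^ (1 - β) * t₁ ^ (-(1 - β)) := by ring
      _ ≤ K * t₁ ^ (-(1 - β)) := hmm
  -- the fencing argument on [t₁, b]
  have hfence : ∀ t ≥ t₁, L t ≤ K * t ^ (-(1 - β)) := by
    intro b hb
    have hfc : ContinuousOn L (Set.Icc t₁ b) := fun x hx =>
      ((hderiv x (le_trans ht₁tstar hx.1)).continuousAt).continuousWithinAt
    have hfd : ∀ x ∈ Set.Ico t₁ b, HasDerivWithinAt L (L' x) (Set.Ici x) x := fun x hx =>
      (hderiv x (le_trans ht₁tstar hx.1)).hasDerivWithinAt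
    have hBc : ContinuousOn (fun s : ℝ => K * s ^ (-(1 - β))) (Set.Icc t₁ b) := fun x hx =>
      ((hBderiv x (lt_of_lt_of_le ht₁0 hx.1)).continuousAt).continuousWithinAt
    have hBd : ∀ x ∈ Set.Ico t₁ b,
        HasDerivWithinAt (fun s : ℝ => K * s ^ (-(1 - β)))
          (K * (-(1 - β) * x ^ (-(1 - β) - 1))) (Set.Ici x) x := fun x hx =>
      (hBderiv x (lt_of_lt_of_le ht₁0 hx.1)).hasDerivWithinAt
    have hbound : ∀ x ∈ Set.Ico t₁ b, L x = K * x ^ (-(1 - β)) →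
        L' x < K * (-(1 - β) * x ^ (-(1 - β) - 1)) := by
      intro x hx hcontact
      have hxt₁ : t₁ ≤ x := hx.1
      have hx0 : (0:ℝ) < x := lt_of_lt_of_le ht₁0 hxt₁
      have hx1 : (1:ℝ) < x := lt_of_lt_of_le ht₁1 hxt₁
      have hlogx : 0 < Real.log x := Real.log_pos hx1
      have hxts : tstar ≤ x := le_trans ht₁tstar hxt₁
      have hxinv : (0:ℝ) < x⁻¹ := inv_pos.2 hx0
      -- rpow algebra
      have hmul1 : x ^ (-β) * x ^ (-(1 - β)) = x⁻¹ := by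
        rw [← Real.rpow_add hx0, show -β + -(1 - β) = -1 by ring, Real.rpow_neg_one]
      have hmul2 : x ^ (-(1 - β) - 1) = x ^ (β - 1) * x⁻¹ := by
        rw [← Real.rpow_neg_one x, ← Real.rpow_add hx0]
        congr 1; ring
      -- bound pieces
      have e1 : C' / Real.log x ≤ C' / Real.log t₁ :=
        div_le_div_of_nonneg_left hC'.le hlogt₁ (Real.log_le_log ht₁0 hxt₁)
      have e2 : C' / Real.log t₁ < C * K / 2 := by
        rw [div_lt_div_iff₀ hlogt₁ (by norm_num : (0:ℝ) < 2)]
        have h7 : 2 * C' < K * (C * Real.log t₁) := by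
          rw [div_lt_iff₀ (by positivity : 0 < C * Real.log t₁)] at hKfrac
          linarith
        linarith [h7]
      have e3 : x ^ (β - 1) ≤ t₁ ^ (β - 1) :=
        Real.rpow_le_rpow_of_nonpos ht₁0 hxt₁ (by linarith)
      have e4 : K * (1 - β) * x ^ (β - 1) < K * (C / 2) := by
        have e5 : (1 - β) * x ^ (β - 1) ≤ (1 - β) * t₁ ^ (β - 1) :=
          mul_le_mul_of_nonneg_left e3 h1β.le
        nlinarith [hK0, hstep]
      have hkey : C' / Real.log x + K * (1 - β) * x ^ (β - 1) < C * K := by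
        linarith
      -- combine
      have h0 := hineq x hxts
      rw [hcontact] at h0
      have h0' : L' x ≤ -(C * K) * x⁻¹ + C' / (x * Real.log x) := by
        calc L' x ≤ -C * x ^ (-β) * (K * x ^ (-(1 - β))) + C' / (x * Real.log x) := h0
          _ = -(C * K) * (x ^ (-β) * x ^ (-(1 - β))) + C' / (x * Real.log x) := by ring
          _ = -(C * K) * x⁻¹ + C' / (x * Real.log x) := by rw [hmul1]
      have hdivsplit : C' / (x * Real.log x) = (C' / Real.log x) * x⁻¹ := by
        rw [mul_comm x (Real.log x), ← div_div, div_eq_mul_inv (C' / Real.log x) x]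
      have key2 : ∀ a u v : ℝ, 0 < v → a + K * (1 - β) * u < C * K →
          -(C * K) * v + a * v < K * (-(1 - β) * (u * v)) := by
        intro a u v hv h
        nlinarith [mul_pos (sub_pos.mpr h) hv]
      have hfinal : -(C * K) * x⁻¹ + C' / (x * Real.log x)
          < K * (-(1 - β) * x ^ (-(1 - β) - 1)) := by
        rw [hmul2, hdivsplit]
        exact key2 _ _ _ hxinv hkey
      linarith
    exact image_le_of_deriv_right_lt_deriv_boundary' hfc hfd ha hBc hBd hbound
      ⟨hb, le_refl b⟩
  -- bound on the compact piece [tstar, t₁]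
  have hLcont : ContinuousOn L (Set.Icc tstar t₁) := fun x hx =>
    ((hderiv x hx.1).continuousAt).continuousWithinAt
  obtain ⟨x₀, hx₀mem, hx₀max⟩ :=
    isCompact_Icc.exists_isMaxOn (Set.nonempty_Icc.2 ht₁tstar) hLcont
  set M : ℝ := L x₀ with hM_def
  have hM0 : 0 ≤ M := hLnonneg x₀ hx₀mem.1
  -- final constant
  refine ⟨max K (M * t₁ ^ (1 - β)) + 1, by positivity, ?_⟩
  intro t ht
  have ht0 : (0:ℝ) < t := by linarith
  have htpow0 : (0:ℝ) < t ^ (-(1 - β)) := Real.rpow_pos_of_pos ht0 _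
  rcases le_or_gt t₁ t with hcase | hcase
  · have hft := hfence t hcase
    have hKle : K ≤ max K (M * t₁ ^ (1 - β)) + 1 := by
      have := le_max_left K (M * t₁ ^ (1 - β)); linarith
    calc L t ≤ K * t ^ (-(1 - β)) := hft
      _ ≤ (max K (M * t₁ ^ (1 - β)) + 1) * t ^ (-(1 - β)) :=
        mul_le_mul_of_nonneg_right hKle htpow0.le
  · have htmem : t ∈ Set.Icc tstar t₁ := ⟨ht, hcase.le⟩
    have hLM : L t ≤ M := hx₀max htmem
    have hpowmono : t₁ ^ (-(1 - β)) ≤ t ^ (-(1 - β)) :=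
      Real.rpow_le_rpow_of_nonpos ht0 hcase.le (by linarith)
    have hmulone : t₁ ^ (1 - β) * t₁ ^ (-(1 - β)) = 1 := by
      rw [← Real.rpow_add ht₁0]; simp
    have hMt : M ≤ M * t₁ ^ (1 - β) * t ^ (-(1 - β)) := by
      calc M = M * (t₁ ^ (1 - β) * t₁ ^ (-(1 - β))) := by rw [hmulone, mul_one]
        _ = M * t₁ ^ (1 - β) * t₁ ^ (-(1 - β)) := by ring
        _ ≤ M * t₁ ^ (1 - β) * t ^ (-(1 - β)) :=
            mul_le_mul_of_nonneg_left hpowmono (by positivity)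
    have hle : M * t₁ ^ (1 - β) ≤ max K (M * t₁ ^ (1 - β)) + 1 := by
      have := le_max_right K (M * t₁ ^ (1 - β)); linarith
    calc L t ≤ M := hLM
      _ ≤ M * t₁ ^ (1 - β) * t ^ (-(1 - β)) := hMt
      _ ≤ (max K (M * t₁ ^ (1 - β)) + 1) * t ^ (-(1 - β)) :=
        mul_le_mul_of_nonneg_right hle htpow0.le
end

section
/- Difference of log partition functions under measure perturbation: for bounded K and probability measures μ₁, μ₂ on X, |log Z⁺(μ₁) − log Z⁺(μ₂)| ≤ τ⁻¹‖K‖_∞ · TV(μ₁, μ₂), where Z⁺(μ) = ∫_Y exp(τ⁻¹∫_X K(x,y)dμ(x)) dy and TV is the total variation distance. -/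
open MeasureTheory Real

/-- Total variation distance `TV(μ₁,μ₂) = sup_{|f|≤1} |∫ f dμ₁ − ∫ f dμ₂|`. -/
noncomputable def tvDist {Z : Type*} [MeasurableSpace Z] (μ₁ μ₂ : Measure Z) : ℝ :=
  ⨆ f : {f : Z → ℝ // Measurable f ∧ ∀ z, |f z| ≤ 1},
    |(∫ z, f.1 z ∂μ₁) - ∫ z, f.1 z ∂μ₂|

lemma tvDist_bddAbove {Z : Type*} [MeasurableSpace Z] (μ₁ μ₂ : Measure Z)
    [IsProbabilityMeasure μ₁] [IsProbabilityMeasure μ₂] :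
    BddAbove (Set.range fun f : {f : Z → ℝ // Measurable f ∧ ∀ z, |f z| ≤ 1} =>
      |(∫ z, f.1 z ∂μ₁) - ∫ z, f.1 z ∂μ₂|) := by
  refine ⟨2, ?_⟩
  rintro r ⟨f, rfl⟩
  have h1 : |∫ z, f.1 z ∂μ₁| ≤ 1 := by
    have := norm_integral_le_of_norm_le_const (μ := μ₁) (f := f.1) (C := 1)
      (Filter.Eventually.of_forall fun z => by simpa using f.2.2 z)
    simpa using this
  have h2 : |∫ z, f.1 z ∂μ₂| ≤ 1 := by
    have := norm_integral_le_of_norm_le_const (μ := μ₂) (f := f.1) (C := 1)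
      (Filter.Eventually.of_forall fun z => by simpa using f.2.2 z)
    simpa using this
  calc |(∫ z, f.1 z ∂μ₁) - ∫ z, f.1 z ∂μ₂| ≤ |∫ z, f.1 z ∂μ₁| + |∫ z, f.1 z ∂μ₂| :=
        abs_sub _ _
    _ ≤ 2 := by linarith

lemma tvDist_nonneg' {Z : Type*} [MeasurableSpace Z] (μ₁ μ₂ : Measure Z)
    [IsProbabilityMeasure μ₁] [IsProbabilityMeasure μ₂] : 0 ≤ tvDist μ₁ μ₂ := by
  have := le_ciSup (tvDist_bddAbove μ₁ μ₂)
    ⟨(fun _ => 0), measurable_const, fun z => by simp⟩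
  simpa [tvDist] using this

/-- Difference of log partition functions under measure perturbation:
`|log Z⁺(μ₁) − log Z⁺(μ₂)| ≤ τ⁻¹ ‖K‖_∞ · TV(μ₁,μ₂)`. -/
theorem logZplus_diff_le_tv {X Y : Type*} [MeasurableSpace X] [MeasurableSpace Y]
    (dy : Measure Y) [IsFiniteMeasure dy]
    (K : X → Y → ℝ) (C : ℝ) (hC : 0 ≤ C) (hKbdd : ∀ x y, |K x y| ≤ C)
    (hKm : Measurable (Function.uncurry K))
    (τ : ℝ) (hτ : 0 < τ)
    (μ₁ μ₂ : Measure X) [IsProbabilityMeasure μ₁] [IsProbabilityMeasure μ₂] :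
    |Real.log (∫ y, Real.exp (τ⁻¹ * ∫ x, K x y ∂μ₁) ∂dy)
      - Real.log (∫ y, Real.exp (τ⁻¹ * ∫ x, K x y ∂μ₂) ∂dy)|
      ≤ τ⁻¹ * C * tvDist μ₁ μ₂ := by
  have hτi : (0:ℝ) < τ⁻¹ := inv_pos.mpr hτ
  have htv : 0 ≤ tvDist μ₁ μ₂ := tvDist_nonneg' μ₁ μ₂
  set δ : ℝ := τ⁻¹ * C * tvDist μ₁ μ₂ with hδ
  have hδ0 : 0 ≤ δ := by positivity
  -- key pointwise bound on the inner integrals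
  have key : ∀ y, |(∫ x, K x y ∂μ₁) - ∫ x, K x y ∂μ₂| ≤ C * tvDist μ₁ μ₂ := by
    intro y
    rcases eq_or_lt_of_le hC with hC0 | hCpos
    · have hK0 : ∀ x, K x y = 0 := fun x => by
        have := hKbdd x y; rw [← hC0] at this
        exact abs_eq_zero.mp (le_antisymm this (abs_nonneg _))
      simp [hK0, ← hC0]
    · set f : X → ℝ := fun x => K x y / C with hf
      have hfm : Measurable f := by
        have : Measurable fun x => K x y :=
          hKm.comp (measurable_id.prodMk measurable_const)
        exact this.div_const C
      have hfb : ∀ x, |f x| ≤ 1 := fun x => by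
        rw [hf]; rw [abs_div, abs_of_pos hCpos, div_le_one hCpos]; exact hKbdd x y
      have hle := le_ciSup (tvDist_bddAbove μ₁ μ₂) ⟨f, hfm, hfb⟩
      have heq : ∀ (μ : Measure X), (∫ x, f x ∂μ) = (∫ x, K x y ∂μ) / C := fun μ =>
        integral_div C fun x => K x y
      rw [show (⨆ g : {g : X → ℝ // Measurable g ∧ ∀ z, |g z| ≤ 1},
          |(∫ z, g.1 z ∂μ₁) - ∫ z, g.1 z ∂μ₂|) = tvDist μ₁ μ₂ from rfl] at hle
      have : |(∫ x, K x y ∂μ₁) - ∫ x, K x y ∂μ₂| / C ≤ tvDist μ₁ μ₂ := by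
        simpa [heq, div_sub_div_same, abs_div, abs_of_pos hCpos] using hle
      calc |(∫ x, K x y ∂μ₁) - ∫ x, K x y ∂μ₂|
          = |(∫ x, K x y ∂μ₁) - ∫ x, K x y ∂μ₂| / C * C := by
            field_simp
        _ ≤ tvDist μ₁ μ₂ * C := by
            exact mul_le_mul_of_nonneg_right this hC
        _ = C * tvDist μ₁ μ₂ := mul_comm _ _
  -- measurability of inner integrals
  have hgm : ∀ (μ : Measure X) [IsProbabilityMeasure μ],
      Measurable fun y => ∫ x, K x y ∂μ := by
    intro μ _
    have hsm : StronglyMeasurable (fun p : Y × X => K p.2 p.1) :=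
      (hKm.comp measurable_swap).stronglyMeasurable
    exact hsm.integral_prod_right'.measurable
  -- boundedness of inner integrals
  have hgb : ∀ (μ : Measure X) [IsProbabilityMeasure μ] (y : Y),
      |∫ x, K x y ∂μ| ≤ C := by
    intro μ _ y
    have := norm_integral_le_of_norm_le_const (μ := μ) (f := fun x => K x y) (C := C)
      (Filter.Eventually.of_forall fun x => by simpa using hKbdd x y)
    simpa using this
  -- integrability
  have hInt : ∀ (μ : Measure X) [IsProbabilityMeasure μ],
      Integrable (fun y => Real.exp (τ⁻¹ * ∫ x, K x y ∂μ)) dy := by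
    intro μ _
    refine ⟨((Real.measurable_exp.comp ((hgm μ).const_mul τ⁻¹))).aestronglyMeasurable, ?_⟩
    refine HasFiniteIntegral.of_bounded (C := Real.exp (τ⁻¹ * C)) ?_
    refine Filter.Eventually.of_forall fun y => ?_
    simp only [norm_eq_abs, abs_of_pos (Real.exp_pos _)]
    apply Real.exp_le_exp.mpr
    have := (abs_le.mp (hgb μ y)).2
    nlinarith [hτi.le]
  rcases eq_or_ne dy 0 with hdy | hdy
  · simp [hdy, hδ0, ← hδ]
  -- positivity of the outer integrals
  have hpos : ∀ (μ : Measure X) [IsProbabilityMeasure μ],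
      0 < ∫ y, Real.exp (τ⁻¹ * ∫ x, K x y ∂μ) ∂dy := by
    intro μ _
    have hconst : Integrable (fun _ : Y => Real.exp (-(τ⁻¹ * C))) dy := integrable_const _
    have hmono : (∫ _ : Y, Real.exp (-(τ⁻¹ * C)) ∂dy)
        ≤ ∫ y, Real.exp (τ⁻¹ * ∫ x, K x y ∂μ) ∂dy := by
      refine integral_mono hconst (hInt μ) fun y => ?_
      apply Real.exp_le_exp.mpr
      have := (abs_le.mp (hgb μ y)).1
      nlinarith [hτi.le]
    have h0 : 0 < (∫ _ : Y, Real.exp (-(τ⁻¹ * C)) ∂dy) := by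
      rw [integral_const, smul_eq_mul]
      have : 0 < (dy Set.univ).toReal := by
        refine ENNReal.toReal_pos ?_ (measure_ne_top _ _)
        simpa [Measure.measure_univ_eq_zero] using hdy
      positivity
    linarith
  -- main comparison in both directions
  have main : ∀ (ν₁ ν₂ : Measure X) [IsProbabilityMeasure ν₁] [IsProbabilityMeasure ν₂],
      (∀ y, |(∫ x, K x y ∂ν₁) - ∫ x, K x y ∂ν₂| ≤ C * tvDist μ₁ μ₂) →
      Real.log (∫ y, Real.exp (τ⁻¹ * ∫ x, K x y ∂ν₁) ∂dy)
        ≤ Real.log (∫ y, Real.exp (τ⁻¹ * ∫ x, K x y ∂ν₂) ∂dy) + δ := by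
    intro ν₁ ν₂ _ _ hkey
    have hle : (∫ y, Real.exp (τ⁻¹ * ∫ x, K x y ∂ν₁) ∂dy)
        ≤ Real.exp δ * ∫ y, Real.exp (τ⁻¹ * ∫ x, K x y ∂ν₂) ∂dy := by
      rw [← integral_const_mul]
      refine integral_mono (hInt ν₁) ((hInt ν₂).const_mul _) fun y => ?_
      rw [← Real.exp_add]
      apply Real.exp_le_exp.mpr
      have h1 := (abs_le.mp (hkey y)).2
      have : τ⁻¹ * ((∫ x, K x y ∂ν₁) - ∫ x, K x y ∂ν₂) ≤ δ := by
        rw [hδ, mul_assoc]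
        exact mul_le_mul_of_nonneg_left (le_trans (le_abs_self _) (hkey y)) hτi.le
      nlinarith
    calc Real.log (∫ y, Real.exp (τ⁻¹ * ∫ x, K x y ∂ν₁) ∂dy)
        ≤ Real.log (Real.exp δ * ∫ y, Real.exp (τ⁻¹ * ∫ x, K x y ∂ν₂) ∂dy) :=
          Real.log_le_log (hpos ν₁) hle
      _ = Real.log (∫ y, Real.exp (τ⁻¹ * ∫ x, K x y ∂ν₂) ∂dy) + δ := by
          rw [Real.log_mul (Real.exp_ne_zero _) (ne_of_gt (hpos ν₂)), Real.log_exp]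
          ring
  have h1 := main μ₁ μ₂ key
  have h2 := main μ₂ μ₁ fun y => by rw [abs_sub_comm]; exact key y
  rw [abs_le]
  constructor <;> linarith
end
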